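/- Fix a density φ, a capacity c ∈ (0,1), and the correlated decision rule U_n(s) = s/n. For every Nash equilibrium f_N of the N-firm instance with thresholds τ given by the Nash equilibrium characterization, τ_1 < 1/Mmax(f_N). Consequently, for any sequence (f_N)_{N≥2} of Nash equilibria of the N-firm instances, the first threshold τ_1 = τ_1(f_N) satisfies lim_{N → ∞} τ_1(f_N) = 0. -/

import Mathlib

open MeasureTheory Set Filter Topology

noncomputable section

/-- The measure of a set `A` under the score density `φ`. -/
def dMeas (φ : ℝ → ℝ) (A : Set ℝ) : ℝ := ∫ s in A, φ s

/-- `K` is a finite union of closed intervals. -/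
def FinUnionIntervals (K : Set ℝ) : Prop :=
  ∃ (n : ℕ) (a b : Fin n → ℝ), K = ⋃ i, Set.Icc (a i) (b i)

/-- A feasible strategy: a finite union of closed intervals inside `[0,1]`
with `φ`-measure at most the capacity `c`. -/
def Feasible (φ : ℝ → ℝ) (c : ℝ) (K : Set ℝ) : Prop :=
  K ⊆ Set.Icc (0:ℝ) 1 ∧ FinUnionIntervals K ∧ dMeas φ K ≤ c

/-- `M(s;K)`: the number of firms interviewing an applicant with score `s`. -/
def numFirms {N : ℕ} (K : Fin N → Set ℝ) (s : ℝ) : ℕ :=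
  Nat.card {i : Fin N // s ∈ K i}

/-- `Mmax(K)`: the maximal congestion over scores in `[0,1]`. -/
def maxFirms {N : ℕ} (K : Fin N → Set ℝ) : ℕ :=
  sSup ((fun s => numFirms K s) '' Set.Icc (0:ℝ) 1)

/-- Firm `i`'s expected utility under the profile `K`. -/
def utility (φ : ℝ → ℝ) (U : ℕ → ℝ → ℝ) {N : ℕ} (K : Fin N → Set ℝ) (i : Fin N) : ℝ :=
  ∫ s in K i, U (numFirms K s) s * φ s

/-- Social welfare: the total utility of all firms. -/
def SW (φ : ℝ → ℝ) (U : ℕ → ℝ → ℝ) {N : ℕ} (K : Fin N → Set ℝ) : ℝ :=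
  ∑ i, utility φ U K i

/-- Nash equilibrium: every strategy is feasible and no firm can strictly
increase its utility by a unilateral feasible deviation. -/
def NashEq (φ : ℝ → ℝ) (c : ℝ) (U : ℕ → ℝ → ℝ) {N : ℕ} (K : Fin N → Set ℝ) : Prop :=
  (∀ i, Feasible φ c (K i)) ∧
  ∀ (i : Fin N) (K' : Set ℝ), Feasible φ c K' →
    utility φ U (Function.update K i K') i ≤ utility φ U K i

/-- Correlated decision rule: `U_n(s) = s / n`. -/
def Ucorr : ℕ → ℝ → ℝ := fun n s => s / n

/-- Independent decision rule: `U_n(s) = (1 - (1-s)^n) / n`. -/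
def Uindep : ℕ → ℝ → ℝ := fun n s => (1 - (1 - s) ^ n) / n

/-- The threshold structure associated with a Nash equilibrium:
`τ 0 = 0`, `τ (N+1) = 1`, the thresholds are nondecreasing, every firm uses its
full capacity, exactly `m` firms interview scores in `[τ m, τ (m+1))`, and the
utilities at the thresholds are nondecreasing. -/
def IsThresholds (φ : ℝ → ℝ) (c : ℝ) (U : ℕ → ℝ → ℝ) {N : ℕ}
    (K : Fin N → Set ℝ) (τ : ℕ → ℝ) : Prop :=
  τ 0 = 0 ∧ τ (N + 1) = 1 ∧ (∀ k, k ≤ N → τ k ≤ τ (k + 1)) ∧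
  (∀ i, dMeas φ (K i) = c) ∧
  (∀ m, m ≤ maxFirms K → ∀ s ∈ Set.Ico (τ m) (τ (m + 1)), numFirms K s = m) ∧
  (∀ n m, 1 ≤ n → n < m → m ≤ maxFirms K → U n (τ n) ≤ U m (τ m))

/-!
If `τ 1 ≥ 1 / Mmax`, the threshold inequality `U_1(τ 1) ≤ U_Mmax(τ Mmax)` forces `τ Mmax ≥ 1`.
Then the segments `[τ m, τ (m + 1))` with `m < Mmax` cover `[0, 1)`, so there the congestion stays
below `Mmax` and is locally constant to the right of every point. As the strategies are closed, a
firm interviewing some `s < 1` then interviews all of `[s, 1)`; every firm has such an `s` because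
its capacity is positive, so the largest of them is interviewed by all `N ≥ Mmax` firms, a
contradiction. For the limit, the capacities add up to `N c = ∫ M(s) φ(s) ds ≤ Mmax`, whence
`0 ≤ τ 1 < 1 / Mmax ≤ 1 / (N c)`.
-/

lemma FinUnionIntervals.isClosed {K : Set ℝ} (h : FinUnionIntervals K) : IsClosed K := by
  obtain ⟨n, a, b, rfl⟩ := h
  exact isClosed_iUnion_of_finite fun i => isClosed_Icc

section Congestion

variable {N : ℕ} {K : Fin N → Set ℝ}

lemma numFirms_eq_ncard (K : Fin N → Set ℝ) (s : ℝ) : numFirms K s = {i | s ∈ K i}.ncard :=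
  rfl

lemma numFirms_le (K : Fin N → Set ℝ) (s : ℝ) : numFirms K s ≤ N := by
  simpa [numFirms] using Finite.card_subtype_le fun i => s ∈ K i

lemma numFirms_pos {s : ℝ} {i : Fin N} (h : s ∈ K i) : 0 < numFirms K s :=
  have : Nonempty {j // s ∈ K j} := ⟨⟨i, h⟩⟩
  Nat.card_pos

lemma numFirms_eq_of_forall_mem {s : ℝ} (h : ∀ i, s ∈ K i) : numFirms K s = N := by
  simp [numFirms, h]

lemma numFirms_le_maxFirms (K : Fin N → Set ℝ) {s : ℝ} (hs : s ∈ Icc (0:ℝ) 1) :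
    numFirms K s ≤ maxFirms K :=
  le_csSup ⟨N, by rintro _ ⟨t, -, rfl⟩; exact numFirms_le K t⟩ ⟨s, hs, rfl⟩

lemma maxFirms_le (K : Fin N → Set ℝ) : maxFirms K ≤ N :=
  csSup_le' <| by rintro _ ⟨t, -, rfl⟩; exact numFirms_le K t

lemma sum_indicator_eq_numFirms_mul (φ : ℝ → ℝ) (K : Fin N → Set ℝ) (s : ℝ) :
    ∑ i, (K i).indicator φ s = numFirms K s * φ s := by
  classical
  simp_rw [Set.indicator_apply]
  rw [← Finset.sum_filter, Finset.sum_const, nsmul_eq_mul, numFirms, Nat.card_eq_fintype_card,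
    Fintype.card_subtype]

end Congestion

lemma exists_mem_Ico_of_le_of_lt (τ : ℕ → ℝ) {b : ℝ} :
    ∀ {n : ℕ}, τ 0 ≤ b → b < τ n → ∃ m < n, b ∈ Ico (τ m) (τ (m + 1))
  | 0, h0, hn => absurd h0 (not_le.2 hn)
  | n + 1, h0, hn => by
    by_cases hb : b < τ n
    · obtain ⟨m, hm, hbm⟩ := exists_mem_Ico_of_le_of_lt τ h0 hb
      exact ⟨m, hm.trans n.lt_succ_self, hbm⟩
    · exact ⟨n, n.lt_succ_self, not_lt.1 hb, hn⟩

section ClosedProfile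

variable {N : ℕ} {K : Fin N → Set ℝ}

lemma eventually_mem_imp_mem (hK : ∀ i, IsClosed (K i)) (b : ℝ) :
    ∀ᶠ u in 𝓝 b, ∀ i, u ∈ K i → b ∈ K i := by
  refine Filter.eventually_all.2 fun i => ?_
  by_cases hb : b ∈ K i
  · exact .of_forall fun _ _ => hb
  · filter_upwards [(hK i).isOpen_compl.mem_nhds hb] with u hu h using absurd h hu

/-- Near `b` no firm is added, so where the congestion stays equal to `numFirms K b`
no firm is dropped either. -/
lemma mem_nhdsGT_of_eventually_numFirms_eq (hK : ∀ i, IsClosed (K i)) {b : ℝ} {j : Fin N}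
    (hb : ∀ᶠ u in 𝓝[>] b, numFirms K u = numFirms K b) (hj : b ∈ K j) : K j ∈ 𝓝[>] b := by
  filter_upwards [hb, nhdsWithin_le_nhds (eventually_mem_imp_mem hK b)] with u hu hsub
  have hfirms : {i | u ∈ K i} = {i | b ∈ K i} :=
    Set.eq_of_subset_of_ncard_le hsub (by rw [← numFirms_eq_ncard, ← numFirms_eq_ncard, hu])
  exact hfirms.symm.subset hj

lemma Icc_subset_of_eventually_numFirms_eq (hK : ∀ i, IsClosed (K i)) {s t : ℝ} {j : Fin N}
    (hloc : ∀ b ∈ Ico s t, ∀ᶠ u in 𝓝[>] b, numFirms K u = numFirms K b) (hs : s ∈ K j) :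
    Icc s t ⊆ K j :=
  ((hK j).inter isClosed_Icc).Icc_subset_of_forall_mem_nhdsWithin hs fun b hb =>
    mem_nhdsGT_of_eventually_numFirms_eq hK (hloc b hb.2) hb.1

lemma exists_forall_mem_of_eventually_numFirms_eq [NeZero N] (hK : ∀ i, IsClosed (K i))
    (hloc : ∀ b ∈ Ico (0:ℝ) 1, ∀ᶠ u in 𝓝[>] b, numFirms K u = numFirms K b)
    (hne : ∀ j, ∃ s ∈ K j, s ∈ Ico (0:ℝ) 1) : ∃ t ∈ Ico (0:ℝ) 1, ∀ j, t ∈ K j := by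
  choose s hsK hs using hne
  obtain ⟨j₀, hj₀⟩ := Finite.exists_max s
  refine ⟨s j₀, hs j₀, fun j => Icc_subset_of_eventually_numFirms_eq hK (fun b hb => ?_) (hsK j)
    ⟨hj₀ j, le_rfl⟩⟩
  exact hloc b ⟨(hs j).1.trans hb.1, hb.2.trans (hs j₀).2⟩

end ClosedProfile

section Thresholds

variable {N : ℕ} {K : Fin N → Set ℝ} {τ : ℕ → ℝ}

/-- If the top threshold `τ Mmax` reaches `1`, the segments `[τ m, τ (m + 1))`, `m < Mmax`,
cover `[0, 1)`. -/
lemma numFirms_lt_maxFirms_of_one_le_threshold (hτ0 : τ 0 = 0)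
    (hseg : ∀ m, m ≤ maxFirms K → ∀ s ∈ Ico (τ m) (τ (m + 1)), numFirms K s = m)
    (hτM : 1 ≤ τ (maxFirms K)) {b : ℝ} (hb : b ∈ Ico (0:ℝ) 1) :
    numFirms K b < maxFirms K ∧ ∀ᶠ u in 𝓝[>] b, numFirms K u = numFirms K b := by
  obtain ⟨m, hm, hbm⟩ := exists_mem_Ico_of_le_of_lt τ (hτ0 ▸ hb.1) (hb.2.trans_le hτM)
  rw [hseg m hm.le b hbm]
  refine ⟨hm, ?_⟩
  filter_upwards [Ioo_mem_nhdsGT hbm.2] with u hu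
  exact hseg m hm.le u ⟨hbm.1.trans hu.1.le, hu.2⟩

lemma threshold_maxFirms_lt_one [NeZero N] (hK : ∀ i, IsClosed (K i))
    (hne : ∀ j, ∃ s ∈ K j, s ∈ Ico (0:ℝ) 1) (hτ0 : τ 0 = 0)
    (hseg : ∀ m, m ≤ maxFirms K → ∀ s ∈ Ico (τ m) (τ (m + 1)), numFirms K s = m) :
    τ (maxFirms K) < 1 := by
  by_contra! hτM
  have hcong := fun b (hb : b ∈ Ico (0:ℝ) 1) =>
    numFirms_lt_maxFirms_of_one_le_threshold hτ0 hseg hτM hb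
  obtain ⟨t, ht, htK⟩ :=
    exists_forall_mem_of_eventually_numFirms_eq hK (fun b hb => (hcong b hb).2) hne
  have := (hcong t ht).1
  rw [numFirms_eq_of_forall_mem htK] at this
  exact (maxFirms_le K).not_gt this

end Thresholds

lemma exists_mem_Ico_of_dMeas_ne_zero {φ : ℝ → ℝ} {A : Set ℝ} (hA : A ⊆ Icc (0:ℝ) 1)
    (h : dMeas φ A ≠ 0) : ∃ s ∈ A, s ∈ Ico (0:ℝ) 1 := by
  by_contra! hA1
  have hA1 : A ⊆ {1} := fun s hs =>
    le_antisymm (hA hs).2 (not_lt.1 fun h => hA1 s hs ⟨(hA hs).1, h⟩)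
  exact h (by rw [dMeas, Measure.restrict_eq_zero.2 (measure_mono_null hA1 Real.volume_singleton),
    integral_zero_measure])

lemma tau_one_lt_inv_maxFirms {φ : ℝ → ℝ} {c : ℝ} {N : ℕ} [NeZero N] {K : Fin N → Set ℝ}
    {τ : ℕ → ℝ} (hc : 0 < c) (hK : ∀ i, Feasible φ c (K i)) (hT : IsThresholds φ c Ucorr K τ) :
    τ 1 < 1 / maxFirms K := by
  obtain ⟨hτ0, -, -, hcap, hseg, hU⟩ := hT
  have hne : ∀ j, ∃ s ∈ K j, s ∈ Ico (0:ℝ) 1 := fun j =>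
    exists_mem_Ico_of_dMeas_ne_zero (hK j).1 (hcap j ▸ hc.ne')
  have hτM := threshold_maxFirms_lt_one (fun i => (hK i).2.1.isClosed) hne hτ0 hseg
  obtain ⟨s, hsK, hs⟩ := hne 0
  have hM : 1 ≤ maxFirms K :=
    (numFirms_pos hsK).trans_le (numFirms_le_maxFirms K (Ico_subset_Icc_self hs))
  have hτ1 : τ 1 ≤ τ (maxFirms K) / maxFirms K := by
    rcases hM.eq_or_lt with hM1 | hM1
    · simp [← hM1]
    · simpa [Ucorr] using hU 1 _ le_rfl hM1 le_rfl
  exact hτ1.trans_lt (div_lt_div_of_pos_right hτM (by exact_mod_cast hM))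

lemma sum_dMeas_le_maxFirms_mul {φ : ℝ → ℝ} {N : ℕ} {K : Fin N → Set ℝ}
    (hφ : IntegrableOn φ (Icc (0:ℝ) 1)) (hφnonneg : ∀ s ∈ Icc (0:ℝ) 1, 0 ≤ φ s)
    (hK : ∀ i, K i ⊆ Icc (0:ℝ) 1) (hKm : ∀ i, MeasurableSet (K i)) :
    ∑ i, dMeas φ (K i) ≤ maxFirms K * ∫ s in Icc (0:ℝ) 1, φ s := by
  have hind : ∀ i, IntegrableOn ((K i).indicator φ) (Icc (0:ℝ) 1) := fun i => hφ.indicator (hKm i)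
  calc ∑ i, dMeas φ (K i) = ∫ s in Icc (0:ℝ) 1, ∑ i, (K i).indicator φ s := by
        rw [integral_finsetSum _ fun i _ => hind i]
        refine Finset.sum_congr rfl fun i _ => ?_
        rw [setIntegral_indicator (hKm i), inter_eq_self_of_subset_right (hK i), dMeas]
    _ ≤ ∫ s in Icc (0:ℝ) 1, maxFirms K * φ s := by
        refine setIntegral_mono_on (integrable_finsetSum _ fun i _ => hind i) (hφ.const_mul _)
          measurableSet_Icc fun s hs => ?_
        rw [sum_indicator_eq_numFirms_mul]
        exact mul_le_mul_of_nonneg_right (mod_cast numFirms_le_maxFirms K hs) (hφnonneg s hs)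
    _ = maxFirms K * ∫ s in Icc (0:ℝ) 1, φ s := integral_const_mul _ _

lemma natCast_mul_le_maxFirms {φ : ℝ → ℝ} {c : ℝ} {N : ℕ} {K : Fin N → Set ℝ}
    (hφ : IntegrableOn φ (Icc (0:ℝ) 1)) (hφnonneg : ∀ s ∈ Icc (0:ℝ) 1, 0 ≤ φ s)
    (hφint : ∫ s in Icc (0:ℝ) 1, φ s = 1) (hK : ∀ i, Feasible φ c (K i))
    (hcap : ∀ i, dMeas φ (K i) = c) : (N : ℝ) * c ≤ maxFirms K := by
  simpa [hcap, hφint] using sum_dMeas_le_maxFirms_mul hφ hφnonneg (fun i => (hK i).1)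
    (fun i => (hK i).2.1.isClosed.measurableSet)

theorem tau_one_vanishes_correlated_general
    (φ : ℝ → ℝ)
    (hφpos : ∀ s ∈ Set.Icc (0:ℝ) 1, 0 < φ s)
    (hφint : ∫ s in Set.Icc (0:ℝ) 1, φ s = 1)
    (c : ℝ) (hc : 0 < c) :
    (∀ (N : ℕ) (K : Fin N → Set ℝ) (τ : ℕ → ℝ), 2 ≤ N →
      NashEq φ c Ucorr K → IsThresholds φ c Ucorr K τ →
      τ 1 < 1 / (maxFirms K : ℝ)) ∧
    (∀ (f : (N : ℕ) → Fin N → Set ℝ) (τ : (N : ℕ) → ℕ → ℝ),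
      (∀ N, 2 ≤ N → NashEq φ c Ucorr (f N) ∧ IsThresholds φ c Ucorr (f N) (τ N)) →
      Tendsto (fun N => τ N 1) atTop (𝓝 0)) := by
  have hφ : IntegrableOn φ (Icc (0:ℝ) 1) :=
    Integrable.of_integral_ne_zero (by rw [hφint]; exact one_ne_zero)
  have hfirst : ∀ (N : ℕ) (K : Fin N → Set ℝ) (τ : ℕ → ℝ), 2 ≤ N →
      NashEq φ c Ucorr K → IsThresholds φ c Ucorr K τ → τ 1 < 1 / (maxFirms K : ℝ) := by
    intro N K τ hN hNash hT
    have : NeZero N := ⟨by omega⟩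
    exact tau_one_lt_inv_maxFirms hc hNash.1 hT
  refine ⟨hfirst, fun f τ h => ?_⟩
  have hbound : ∀ N : ℕ, 2 ≤ N → τ N 1 ∈ Icc 0 ((N : ℝ) * c)⁻¹ := by
    intro N hN
    obtain ⟨hNash, hT⟩ := h N hN
    have hcount : (N : ℝ) * c ≤ maxFirms (f N) :=
      natCast_mul_le_maxFirms hφ (fun s hs => (hφpos s hs).le) hφint hNash.1 hT.2.2.2.1
    refine ⟨by simpa [hT.1] using hT.2.2.1 0 (by omega), ?_⟩
    calc τ N 1 ≤ 1 / maxFirms (f N) := (hfirst N (f N) (τ N) hN hNash hT).le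
      _ ≤ ((N : ℝ) * c)⁻¹ := by
        rw [one_div]
        exact inv_anti₀ (by positivity) hcount
  refine tendsto_of_tendsto_of_tendsto_of_le_of_le' tendsto_const_nhds
    (tendsto_natCast_atTop_atTop.atTop_mul_const hc).inv_tendsto_atTop ?_ ?_
  all_goals filter_upwards [eventually_ge_atTop 2] with N hN
  exacts [(hbound N hN).1, (hbound N hN).2]

/-- **Lemma (the first threshold vanishes, correlated rule).**
For every Nash equilibrium of the `N`-firm instance with the correlated rule
and thresholds `τ`, one has `τ_1 < 1 / Mmax`; consequently, along any sequence
of Nash equilibria of the `N`-firm instances, `τ_1(f_N) → 0`. -/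
theorem tau_one_vanishes_correlated
    (φ : ℝ → ℝ)
    (hφm : Measurable φ) (hφpos : ∀ s ∈ Set.Icc (0:ℝ) 1, 0 < φ s)
    (hφint : ∫ s in Set.Icc (0:ℝ) 1, φ s = 1)
    (c : ℝ) (hc : 0 < c) (hc1 : c < 1) :
    (∀ (N : ℕ) (K : Fin N → Set ℝ) (τ : ℕ → ℝ), 2 ≤ N →
      NashEq φ c Ucorr K → IsThresholds φ c Ucorr K τ →
      τ 1 < 1 / (maxFirms K : ℝ)) ∧
    (∀ (f : (N : ℕ) → Fin N → Set ℝ) (τ : (N : ℕ) → ℕ → ℝ),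
      (∀ N, 2 ≤ N → NashEq φ c Ucorr (f N) ∧ IsThresholds φ c Ucorr (f N) (τ N)) →
      Tendsto (fun N => τ N 1) atTop (𝓝 0)) :=
  tau_one_vanishes_correlated_general φ hφpos hφint c hc
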